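/- arXiv:1810.02882 — 7 statements merged into one kernel-verified Lean document; each statement's English description precedes it below -/
import Mathlib

section
/- For a connected graph G of order n ≥ 2, the fractional local metric dimension of G equals 1 if and only if G is bipartite. -/
open scoped Classical
open Finset

namespace FracLocal

/-- The local resolving neighborhood of a (potential) edge `uv`:
vertices whose distances to `u` and `v` differ. -/
noncomputable def locRes {V : Type*} [Fintype V] (G : SimpleGraph V) (u v : V) : Finset V :=
  Finset.univ.filter (fun x => G.dist x u ≠ G.dist x v)

/-- A local resolving function: values in `[0,1]` summing to at least `1`
on every local resolving neighborhood of an edge. -/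
def IsLRF {V : Type*} [Fintype V] (G : SimpleGraph V) (f : V → ℝ) : Prop :=
  (∀ x, 0 ≤ f x ∧ f x ≤ 1) ∧ ∀ u v, G.Adj u v → 1 ≤ ∑ x ∈ locRes G u v, f x

/-- The fractional local metric dimension. -/
noncomputable def ldimf {V : Type*} [Fintype V] (G : SimpleGraph V) : ℝ :=
  sInf {w : ℝ | ∃ f : V → ℝ, IsLRF G f ∧ w = ∑ x, f x}

/-- The (integral) local metric dimension. -/
noncomputable def ldim {V : Type*} [Fintype V] (G : SimpleGraph V) : ℕ :=
  sInf {k : ℕ | ∃ S : Finset V, S.card = k ∧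
    ∀ u v, G.Adj u v → (S ∩ locRes G u v).Nonempty}

/-- `l(G)`: the minimum cardinality of a local resolving neighborhood of an edge. -/
noncomputable def lG {V : Type*} [Fintype V] (G : SimpleGraph V) : ℕ :=
  sInf {k : ℕ | ∃ u v, G.Adj u v ∧ (locRes G u v).card = k}

/-- The closed neighborhood `N[u]`. -/
def closedNbhd {V : Type*} (G : SimpleGraph V) (u : V) : Set V :=
  insert u (G.neighborSet u)

/-- `u` and `v` are true twins: distinct vertices with `N[u] = N[v]`. -/
def TrueTwins {V : Type*} (G : SimpleGraph V) (u v : V) : Prop :=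
  u ≠ v ∧ closedNbhd G u = closedNbhd G v

section Aux
variable {V : Type*} [Fintype V] {G : SimpleGraph V}
set_option linter.unusedSectionVars false

/-- parity along a walk for a ZMod 2 coloring -/
lemma walk_parity (c : G.Coloring (ZMod 2)) {a b : V} (p : G.Walk a b) :
    c b = c a + p.length := by
  induction p with
  | nil => simp
  | cons h q ih =>
    rename_i u v w
    have h2 : c v = c u + 1 := by
      have := c.valid h
      revert this
      generalize c u = x; generalize c v = y
      revert x y; decide
    rw [ih, h2]
    push_cast [SimpleGraph.Walk.length_cons]
    ring

lemma dist_parity (hconn : G.Connected) (c : G.Coloring (ZMod 2)) (x u : V) :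
    c u = c x + G.dist x u := by
  obtain ⟨p, hp⟩ := hconn.exists_walk_length_eq_dist x u
  simpa [hp] using walk_parity c p

/-- in bipartite connected graph every locRes is everything -/
lemma locRes_eq_univ (hconn : G.Connected) (c : G.Coloring (ZMod 2)) {u v : V}
    (h : G.Adj u v) : locRes G u v = Finset.univ := by
  ext x
  simp only [locRes, Finset.mem_filter, Finset.mem_univ, true_and, iff_true]
  intro hd
  apply c.valid h
  rw [dist_parity hconn c x u, dist_parity hconn c x v, hd]

lemma exists_edge (hconn : G.Connected) (hn : 2 ≤ Fintype.card V) :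
    ∃ u v, G.Adj u v := by
  obtain ⟨a, b, hab⟩ := Fintype.exists_pair_of_one_lt_card hn
  obtain ⟨p⟩ := hconn a b
  cases p with
  | nil => exact absurd rfl hab
  | cons h q => exact ⟨_, _, h⟩

lemma lrf_sum_ge_one {f : V → ℝ} (hf : IsLRF G f) {u v : V} (h : G.Adj u v) :
    1 ≤ ∑ x, f x := by
  refine le_trans (hf.2 u v h) ?_
  exact Finset.sum_le_sum_of_subset_of_nonneg (Finset.subset_univ _)
    (fun x _ _ => (hf.1 x).1)

lemma const_lrf (hconn : G.Connected) (hn : 2 ≤ Fintype.card V)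
    (hcol : G.Colorable 2) : IsLRF G (fun _ => (Fintype.card V : ℝ)⁻¹) := by
  have hc0 : (0 : ℝ) < Fintype.card V := by positivity
  obtain ⟨c⟩ := hcol
  set c2 : G.Coloring (ZMod 2) := SimpleGraph.Coloring.mk
    (fun v => ((c v : ℕ) : ZMod 2)) (by
      intro a b hab hEq
      apply c.valid hab
      have := (ZMod.natCast_eq_natCast_iff' _ _ _).mp hEq
      have h1 : (c a : ℕ) < 2 := (c a).2
      have h2 : (c b : ℕ) < 2 := (c b).2
      exact Fin.ext (by omega)) with hc2
  constructor
  · intro x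
    constructor
    · positivity
    · rw [inv_le_one_iff₀]; right; exact_mod_cast Nat.one_le_iff_ne_zero.mpr (by positivity)
  · intro u v huv
    rw [locRes_eq_univ hconn c2 huv, Finset.sum_const, Finset.card_univ, nsmul_eq_mul,
      mul_inv_cancel₀ (ne_of_gt hc0)]

/-- If G is not 2-colorable, then every vertex misses some locRes. -/
lemma misses (hconn : G.Connected) (hns : ¬ G.Colorable 2) (x : V) :
    ∃ u v, G.Adj u v ∧ G.dist x u = G.dist x v := by
  by_contra hcon
  push_neg at hcon
  apply hns
  have valid : ∀ {a b : V}, G.Adj a b →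
      ((G.dist x a : ZMod 2) ≠ (G.dist x b : ZMod 2)) := by
    intro a b hab
    have hne := hcon a b hab
    have h1 : G.dist x b ≤ G.dist x a + 1 := by
      have := hconn.dist_triangle (u := x) (v := a) (w := b)
      rwa [SimpleGraph.dist_eq_one_iff_adj.mpr hab] at this
    have h2 : G.dist x a ≤ G.dist x b + 1 := by
      have := hconn.dist_triangle (u := x) (v := b) (w := a)
      rwa [SimpleGraph.dist_eq_one_iff_adj.mpr hab.symm] at this
    intro hEq
    have := (ZMod.natCast_eq_natCast_iff' _ _ _).mp hEq
    omega
  have c : G.Coloring (ZMod 2) := SimpleGraph.Coloring.mk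
    (fun v => (G.dist x v : ZMod 2)) valid
  simpa using c.colorable
end Aux

end FracLocal

open FracLocal in
/-- For a connected graph `G` of order `n ≥ 2`, the fractional local
metric dimension of `G` equals `1` iff `G` is bipartite. -/
theorem stmt_0 {V : Type*} [Fintype V] (G : SimpleGraph V)
    (hconn : G.Connected) (hn : 2 ≤ Fintype.card V) :
    ldimf G = 1 ↔ G.Colorable 2 := by
  obtain ⟨u0, v0, h0⟩ := exists_edge hconn hn
  set S := {w : ℝ | ∃ f : V → ℝ, IsLRF G f ∧ w = ∑ x, f x} with hS
  have hSne : S.Nonempty := by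
    refine ⟨∑ x : V, (1 : ℝ), fun _ => 1, ⟨fun x => ⟨zero_le_one, le_refl 1⟩, ?_⟩, rfl⟩
    intro u v huv
    have hu : u ∈ locRes G u v := by
      simp only [locRes, Finset.mem_filter, Finset.mem_univ, true_and,
        SimpleGraph.dist_self]
      rw [SimpleGraph.dist_comm, SimpleGraph.dist_eq_one_iff_adj.mpr huv.symm]
      omega
    calc (1:ℝ) = ∑ x ∈ {u}, (1:ℝ) := by simp
    _ ≤ ∑ x ∈ locRes G u v, 1 := by
        apply Finset.sum_le_sum_of_subset_of_nonneg (by simpa using hu)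
        intros; norm_num
  constructor
  · -- ldimf = 1 → bipartite
    intro h1
    by_contra hns
    set n : ℝ := (Fintype.card V : ℝ) with hn'
    have hn1 : (2:ℝ) ≤ n := by rw [hn']; exact_mod_cast hn
    have key : ∀ w ∈ S, n / (n - 1) ≤ w := by
      rintro w ⟨f, hf, rfl⟩
      have hx : ∀ x : V, f x ≤ (∑ y, f y) - 1 := by
        intro x
        obtain ⟨u, v, huv, hd⟩ := misses hconn hns x
        have hsub : locRes G u v ⊆ Finset.univ.erase x := by
          intro y hy
          simp only [locRes, Finset.mem_filter] at hy
          simp only [Finset.mem_erase, Finset.mem_univ, and_true]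
          rintro rfl; exact hy.2 hd
        have h1' : 1 ≤ ∑ y ∈ Finset.univ.erase x, f y :=
          le_trans (hf.2 u v huv)
            (Finset.sum_le_sum_of_subset_of_nonneg hsub (fun y _ _ => (hf.1 y).1))
        have : ∑ y ∈ Finset.univ.erase x, f y = (∑ y, f y) - f x := by
          rw [Finset.sum_erase_eq_sub (Finset.mem_univ x)]
        linarith
      have hsum : n * 1 ≤ (n - 1) * (∑ y, f y) := by
        have := Finset.sum_le_sum (s := (Finset.univ : Finset V)) (fun x _ => hx x)
        have hcard : ∑ _x : V, ((∑ y, f y) - 1) = n * ((∑ y, f y) - 1) := by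
          rw [Finset.sum_const, Finset.card_univ, nsmul_eq_mul, hn']
        rw [hcard] at this
        nlinarith
      rw [div_le_iff₀ (by linarith)]
      linarith [hsum]
    have hge : n / (n - 1) ≤ ldimf G := le_csInf hSne key
    rw [h1] at hge
    rw [div_le_one (by linarith)] at hge
    linarith
  · -- bipartite → ldimf = 1
    intro hcol
    have hlrf := const_lrf hconn hn hcol
    have h1mem : (1:ℝ) ∈ S := by
      refine ⟨_, hlrf, ?_⟩
      rw [Finset.sum_const, Finset.card_univ, nsmul_eq_mul,
        mul_inv_cancel₀ (by positivity : (Fintype.card V : ℝ) ≠ 0)]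
    have hlb : ∀ w ∈ S, (1:ℝ) ≤ w := by
      rintro w ⟨f, hf, rfl⟩
      exact lrf_sum_ge_one hf h0
    exact le_antisymm (csInf_le ⟨1, hlb⟩ h1mem) (le_csInf hSne hlb)
end

section
/- If G is a connected graph of order n ≥ 2 such that some vertex u of G has no true twin, then ldim_f(G) ≤ (n-1)/2. -/
open scoped Classical
open Finset

open FracLocal in
/-- If some vertex of a connected graph `G` of order `n ≥ 2` has no
true twin, then `ldim_f(G) ≤ (n-1)/2`. -/
theorem stmt_2 {V : Type*} [Fintype V] (G : SimpleGraph V)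
    (hconn : G.Connected) (hn : 2 ≤ Fintype.card V)
    (h : ∃ u : V, ¬ ∃ v : V, TrueTwins G u v) :
    ldimf G ≤ ((Fintype.card V : ℝ) - 1) / 2 := by
  obtain ⟨u, hu⟩ := h
  set f : V → ℝ := fun x => if x = u then 0 else 1/2 with hf
  -- key: for any edge v w with u ∈ {v,w}, there is x ∉ {u} in locRes besides the other endpoint
  have hmem : ∀ v w : V, G.Adj v w → v ∈ locRes G v w ∧ w ∈ locRes G v w := by
    intro v w hvw
    have h1 : G.dist v w = 1 := SimpleGraph.dist_eq_one_iff_adj.mpr hvw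
    have h2 : G.dist w v = 1 := SimpleGraph.dist_eq_one_iff_adj.mpr hvw.symm
    constructor <;> simp [locRes, SimpleGraph.dist_self, h1, h2]
  -- the special vertex for edges at u
  have hspec : ∀ w : V, G.Adj u w → ∃ x, x ≠ u ∧ x ≠ w ∧ x ∈ locRes G u w := by
    intro w huw
    have hne : closedNbhd G u ≠ closedNbhd G w := by
      intro he; exact hu ⟨w, huw.ne, he⟩
    have : ∃ x, (x ∈ closedNbhd G u ∧ x ∉ closedNbhd G w) ∨
        (x ∈ closedNbhd G w ∧ x ∉ closedNbhd G u) := by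
      by_contra hc
      push_neg at hc
      apply hne
      ext x
      have := hc x
      tauto
    obtain ⟨x, hx | hx⟩ := this
    · obtain ⟨hxu, hxw⟩ := hx
      have hxne_w : x ≠ w := fun he => hxw (by simp [closedNbhd, he])
      have hxne_u : x ≠ u := fun he => hxw (by simp [closedNbhd, he, huw.symm])
      have hadj : G.Adj u x := by
        rcases hxu with he | hm
        · exact absurd he hxne_u
        · exact hm
      have hd1 : G.dist x u = 1 := SimpleGraph.dist_eq_one_iff_adj.mpr hadj.symm
      have hd2 : G.dist x w ≠ 1 := by
        intro he
        exact hxw (Or.inr (SimpleGraph.dist_eq_one_iff_adj.mp he).symm)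
      exact ⟨x, hxne_u, hxne_w, by simp [locRes, hd1]; exact fun he => hd2 he.symm⟩
    · obtain ⟨hxw, hxu⟩ := hx
      have hxne_u : x ≠ u := fun he => hxu (by simp [closedNbhd, he])
      have hxne_w : x ≠ w := fun he => hxu (by simp [closedNbhd, he, huw])
      have hadj : G.Adj w x := by
        rcases hxw with he | hm
        · exact absurd he hxne_w
        · exact hm
      have hd1 : G.dist x w = 1 := SimpleGraph.dist_eq_one_iff_adj.mpr hadj.symm
      have hd2 : G.dist x u ≠ 1 := by
        intro he
        exact hxu (Or.inr (SimpleGraph.dist_eq_one_iff_adj.mp he).symm)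
      exact ⟨x, hxne_u, hxne_w, by simp [locRes, hd1, fun he => hd2 he]⟩
  have hf0 : ∀ x, 0 ≤ f x := by intro x; simp only [hf]; split <;> norm_num
  have hLRF : IsLRF G f := by
    refine ⟨fun x => ⟨hf0 x, by simp only [hf]; split <;> norm_num⟩, ?_⟩
    intro v w hvw
    have key : ∃ a b : V, a ≠ b ∧ a ≠ u ∧ b ≠ u ∧ a ∈ locRes G v w ∧ b ∈ locRes G v w := by
      by_cases hv : v = u
      · subst hv
        obtain ⟨x, hx1, hx2, hx3⟩ := hspec w hvw
        exact ⟨x, w, hx2, hx1, hvw.ne', hx3, (hmem v w hvw).2⟩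
      · by_cases hw : w = u
        · subst hw
          obtain ⟨x, hx1, hx2, hx3⟩ := hspec v hvw.symm
          have : locRes G w v = locRes G v w := by
            ext y; simp [locRes]; tauto
          exact ⟨x, v, hx2, hx1, hvw.ne, this ▸ hx3, (hmem v w hvw).1⟩
        · exact ⟨v, w, hvw.ne, hv, hw, (hmem v w hvw).1, (hmem v w hvw).2⟩
    obtain ⟨a, b, hab, hau, hbu, ha, hb⟩ := key
    have hsub : {a, b} ⊆ locRes G v w := by
      intro x hx; simp at hx; rcases hx with rfl | rfl <;> assumption
    have : (1:ℝ) = ∑ x ∈ ({a, b} : Finset V), f x := by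
      rw [Finset.sum_pair hab]
      simp [hf, hau, hbu]
      norm_num
    rw [this]
    exact Finset.sum_le_sum_of_subset_of_nonneg hsub (fun x _ _ => hf0 x)
  have hsum : ∑ x, f x = ((Fintype.card V : ℝ) - 1) / 2 := by
    have : ∀ x, f x = 1/2 - (if x = u then 1/2 else 0) := by
      intro x; simp only [hf]; split <;> norm_num
    simp only [this, Finset.sum_sub_distrib, Finset.sum_const, Finset.sum_ite_eq', Finset.mem_univ,
      if_true, Finset.card_univ, nsmul_eq_mul]
    ring
  have hmemS : ((Fintype.card V : ℝ) - 1) / 2 ∈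
      {w : ℝ | ∃ f : V → ℝ, IsLRF G f ∧ w = ∑ x, f x} := ⟨f, hLRF, hsum.symm⟩
  apply csInf_le _ hmemS
  refine ⟨0, ?_⟩
  rintro w ⟨g, hg, rfl⟩
  exact Finset.sum_nonneg fun x _ => (hg.1 x).1
end

section
/- Let G be a connected graph of order n ≥ 2. Then ldim_f(G) = n/2 if and only if every vertex of G has a true twin. -/
/-!
Every vertex other than `u` and `v` is equidistant from true twins `u, v`, so `L(uv) = {u, v}`;
for an edge `uv` whose ends are not twins, a vertex of `N[u] △ N[v]` is a third element of
`L(uv)`. Hence `f ≡ 1/2` is always a local resolving function, and if some vertex `a` has no twin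
then lowering `f a` to `0` keeps it one, so `ldim_f(G) ≤ (n - 1)/2`. Conversely, if every vertex
has a twin, any local resolving function satisfies `f x + f y ≥ 1` for any two distinct vertices
of a twin class, and such a class of size `k ≥ 2` then carries weight at least `k/2`.
-/

open scoped Classical
open Finset

namespace FracLocal

open SimpleGraph

section Combinatorics

variable {ι : Type*}

lemma half_card_le_sum_of_pairwise {s : Finset ι} {f : ι → ℝ} (hs : s.Nontrivial)
    (hpair : ∀ x ∈ s, ∀ y ∈ s, x ≠ y → 1 ≤ f x + f y) :
    (#s : ℝ) / 2 ≤ ∑ x ∈ s, f x := by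
  obtain ⟨x₀, hx₀, hmin⟩ := s.exists_min_image f hs.nonempty
  obtain ⟨y₀, hy₀, hne⟩ := hs.exists_ne x₀
  -- Every element but the minimiser `x₀` pairs with `x₀`, hence is at least `1 / 2`.
  have hhalf : ∀ y ∈ s, y ≠ x₀ → 1 / 2 ≤ f y := fun y hy hy₀ => by
    linarith [hpair y hy x₀ hx₀ hy₀, hmin y hy]
  set t := (s.erase x₀).erase y₀
  have hcard : #t + 2 = #s := by
    rw [card_erase_of_mem (mem_erase.2 ⟨hne, hy₀⟩), card_erase_of_mem hx₀]
    have := one_lt_card_iff_nontrivial.2 hs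
    omega
  have ht : (#t : ℝ) * (1 / 2) ≤ ∑ y ∈ t, f y := by
    simpa using card_nsmul_le_sum t f (1 / 2) fun y hy =>
      hhalf y (mem_of_mem_erase (mem_of_mem_erase hy)) (ne_of_mem_erase (mem_of_mem_erase hy))
  rw [← add_sum_erase s f hx₀, ← add_sum_erase _ f (mem_erase.2 ⟨hne, hy₀⟩), ← hcard]
  push_cast
  linarith [hpair x₀ hx₀ y₀ hy₀ hne.symm]

lemma half_card_le_sum_of_exists_ne {κ : Type*} [Fintype ι] [Fintype κ] [DecidableEq κ]
    (c : ι → κ) (f : ι → ℝ) (hex : ∀ x, ∃ y ≠ x, c y = c x)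
    (hpair : ∀ x y, x ≠ y → c x = c y → 1 ≤ f x + f y) :
    (Fintype.card ι : ℝ) / 2 ≤ ∑ x, f x := by
  have hfiber : ∀ j, (#{x | c x = j} : ℝ) / 2 ≤ ∑ x with c x = j, f x := by
    intro j
    obtain hempty | ⟨x, hx⟩ := (univ.filter (c · = j)).eq_empty_or_nonempty
    · simp [hempty]
    obtain ⟨y, hyx, hy⟩ := hex x
    refine half_card_le_sum_of_pairwise ⟨x, hx, y, ?_, hyx.symm⟩ fun a ha b hb hab => ?_
    · simp_all
    · simp only [mem_filter, mem_univ, true_and] at ha hb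
      exact hpair a b hab (ha.trans hb.symm)
  calc (Fintype.card ι : ℝ) / 2 = ∑ j, (#{x | c x = j} : ℝ) / 2 := by
        rw [← sum_div, ← Nat.cast_sum, ← card_eq_sum_card_fiberwise fun _ _ => mem_univ _,
          card_univ]
    _ ≤ ∑ j, ∑ x with c x = j, f x := sum_le_sum fun j _ => hfiber j
    _ = ∑ x, f x := sum_fiberwise _ _ _

lemma sum_ite_eq_zero_half [DecidableEq ι] (s : Finset ι) (a : ι) :
    ∑ x ∈ s, (if x = a then 0 else 1 / 2 : ℝ) = (#(s.erase a) : ℝ) / 2 := by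
  rw [← sum_erase s (f := fun x => if x = a then (0 : ℝ) else 1 / 2) (if_pos rfl),
    sum_congr rfl fun x hx => if_neg (ne_of_mem_erase hx), sum_const, nsmul_eq_mul]
  ring

end Combinatorics

section Graph

variable {V : Type*} {G : SimpleGraph V} {u v x a : V}

lemma mem_closedNbhd : x ∈ closedNbhd G u ↔ x = u ∨ G.Adj u x := Iff.rfl

lemma TrueTwins.symm (h : TrueTwins G u v) : TrueTwins G v u := ⟨h.1.symm, h.2.symm⟩

lemma TrueTwins.adj (h : TrueTwins G u v) : G.Adj u v := by
  obtain hvu | huv := mem_closedNbhd.1 (h.2 ▸ Set.mem_insert v _ : v ∈ closedNbhd G u)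
  · exact absurd hvu.symm h.1
  · exact huv

lemma dist_le_of_neighborSet_subset (hr : G.Reachable u x) (hxu : x ≠ u)
    (h : G.neighborSet u ⊆ closedNbhd G v) : G.dist v x ≤ G.dist u x := by
  obtain ⟨p, hp⟩ := hr.exists_walk_length_eq_dist
  cases p with
  | nil => exact absurd rfl hxu
  | cons huw q =>
    rw [← hp, Walk.length_cons]
    obtain rfl | hvw := h huw
    · exact (dist_le q).trans (Nat.le_succ _)
    · exact dist_le (Walk.cons hvw q)

lemma dist_eq_of_closedNbhd_eq (hconn : G.Connected) (h : closedNbhd G u = closedNbhd G v)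
    (hxu : x ≠ u) (hxv : x ≠ v) : G.dist u x = G.dist v x :=
  le_antisymm
    (dist_le_of_neighborSet_subset (hconn v x) hxv (h ▸ Set.subset_insert _ _))
    (dist_le_of_neighborSet_subset (hconn u x) hxu (h ▸ Set.subset_insert _ _))

variable [Fintype V]

lemma mem_locRes : x ∈ locRes G u v ↔ G.dist x u ≠ G.dist x v := by
  simp [locRes]

lemma locRes_comm : locRes G u v = locRes G v u := by
  ext x
  simp only [mem_locRes, ne_comm]

lemma pair_subset_locRes (hr : G.Reachable u v) (huv : u ≠ v) : {u, v} ⊆ locRes G u v := by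
  have hpos := hr.pos_dist_of_ne huv
  intro x hx
  rcases mem_insert.1 hx with rfl | hx
  · rw [mem_locRes, dist_self]
    exact hpos.ne
  · rw [mem_singleton.1 hx, mem_locRes, dist_self, dist_comm]
    exact hpos.ne'

lemma locRes_eq_pair_of_trueTwins (hconn : G.Connected) (h : TrueTwins G u v) :
    locRes G u v = {u, v} := by
  refine Subset.antisymm (fun x hx => ?_) (pair_subset_locRes (hconn u v) h.1)
  by_contra hxuv
  simp only [mem_insert, mem_singleton, not_or] at hxuv
  rw [mem_locRes, dist_comm, dist_comm (u := x)] at hx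
  exact hx (dist_eq_of_closedNbhd_eq hconn h.2 hxuv.1 hxuv.2)

lemma mem_locRes_of_mem_closedNbhd_of_notMem (huv : G.Adj u v) (hxu : x ∈ closedNbhd G u)
    (hxv : x ∉ closedNbhd G v) : x ∈ locRes G u v ∧ x ≠ u ∧ x ≠ v := by
  have hxu' : x ≠ u := by
    rintro rfl
    exact hxv (Or.inr huv.symm)
  have hxv' : x ≠ v := by
    rintro rfl
    exact hxv (Set.mem_insert x _)
  have hux : G.Adj u x := (mem_closedNbhd.1 hxu).resolve_left hxu'
  refine ⟨?_, hxu', hxv'⟩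
  rw [mem_locRes, dist_comm, dist_eq_one_iff_adj.2 hux, dist_comm, Ne, eq_comm,
    dist_eq_one_iff_adj]
  exact fun hvx => hxv (Or.inr hvx)

lemma exists_mem_locRes_of_not_trueTwins (huv : G.Adj u v) (h : ¬TrueTwins G u v) :
    ∃ x ∈ locRes G u v, x ≠ u ∧ x ≠ v := by
  obtain ⟨x, hx⟩ : ∃ x, ¬(x ∈ closedNbhd G u ↔ x ∈ closedNbhd G v) := by
    by_contra! hall
    exact h ⟨huv.ne, Set.ext hall⟩
  by_cases hxu : x ∈ closedNbhd G u
  · exact ⟨x, mem_locRes_of_mem_closedNbhd_of_notMem huv hxu fun hxv =>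
      hx (iff_of_true hxu hxv)⟩
  · obtain ⟨hx', hxv, hxu'⟩ :=
      mem_locRes_of_mem_closedNbhd_of_notMem huv.symm ((not_iff.1 hx).1 hxu) hxu
    exact ⟨x, locRes_comm (G := G) ▸ hx', hxu', hxv⟩

lemma two_le_card_erase_locRes (hconn : G.Connected) (huv : G.Adj u v)
    (ha : ∀ w, ¬TrueTwins G a w) : 2 ≤ #((locRes G u v).erase a) := by
  by_cases htw : TrueTwins G u v
  · have hau : a ≠ u := fun h => ha v (h ▸ htw)
    have hav : a ≠ v := fun h => ha u (h ▸ htw.symm)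
    rw [locRes_eq_pair_of_trueTwins hconn htw, erase_eq_of_notMem (by simp [hau, hav]),
      card_pair htw.1]
  · obtain ⟨x, hx, hxu, hxv⟩ := exists_mem_locRes_of_not_trueTwins huv htw
    have hsub : insert x {u, v} ⊆ locRes G u v :=
      insert_subset hx (pair_subset_locRes huv.reachable huv.ne)
    have h3 : #(insert x {u, v}) = 3 := by
      rw [card_insert_of_notMem (by simp [hxu, hxv]), card_pair huv.ne]
    have := card_le_card hsub
    have := pred_card_le_card_erase (s := locRes G u v) (a := a)
    omega

lemma isLRF_const_half (hconn : G.Connected) : IsLRF G fun _ => 1 / 2 := by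
  refine ⟨fun _ => by norm_num, fun u v huv => ?_⟩
  have h2 : (2 : ℝ) ≤ #(locRes G u v) := by
    exact_mod_cast (card_pair huv.ne).symm.le.trans (card_le_card
      (pair_subset_locRes (hconn u v) huv.ne))
  rw [sum_const, nsmul_eq_mul]
  linarith

lemma isLRF_ite_eq_zero_half (hconn : G.Connected) (ha : ∀ w, ¬TrueTwins G a w) :
    IsLRF G fun x => if x = a then 0 else 1 / 2 := by
  refine ⟨fun x => by dsimp only; split_ifs <;> norm_num, fun u v huv => ?_⟩
  have h2 : (2 : ℝ) ≤ #((locRes G u v).erase a) := by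
    exact_mod_cast two_le_card_erase_locRes hconn huv ha
  rw [sum_ite_eq_zero_half]
  linarith

lemma ldimf_le_sum {f : V → ℝ} (hf : IsLRF G f) : ldimf G ≤ ∑ x, f x :=
  csInf_le ⟨0, by rintro _ ⟨g, hg, rfl⟩; exact sum_nonneg fun x _ => (hg.1 x).1⟩
    ⟨f, hf, rfl⟩

lemma le_ldimf {c : ℝ} (hex : ∃ f, IsLRF G f) (h : ∀ f, IsLRF G f → c ≤ ∑ x, f x) :
    c ≤ ldimf G :=
  le_csInf (let ⟨f, hf⟩ := hex; ⟨_, f, hf, rfl⟩) fun _ ⟨f, hf, hw⟩ => hw ▸ h f hf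

lemma ldimf_le_half_card (hconn : G.Connected) : ldimf G ≤ (Fintype.card V : ℝ) / 2 := by
  simpa [card_univ, div_eq_mul_inv] using ldimf_le_sum (isLRF_const_half hconn)

lemma ldimf_le_of_forall_not_trueTwins (hconn : G.Connected) (ha : ∀ w, ¬TrueTwins G a w) :
    ldimf G ≤ ((Fintype.card V : ℝ) - 1) / 2 := by
  have hsum := ldimf_le_sum (isLRF_ite_eq_zero_half hconn ha)
  rwa [sum_ite_eq_zero_half, card_erase_of_mem (mem_univ a), card_univ,
    Nat.cast_pred (Fintype.card_pos_iff.2 ⟨a⟩)] at hsum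

lemma half_card_le_ldimf (hconn : G.Connected) (h : ∀ u, ∃ v, TrueTwins G u v) :
    (Fintype.card V : ℝ) / 2 ≤ ldimf G := by
  refine le_ldimf ⟨_, isLRF_const_half hconn⟩ fun f hf => ?_
  refine half_card_le_sum_of_exists_ne (closedNbhd G) f
    (fun x => (h x).imp fun y hy => ⟨hy.1.symm, hy.2.symm⟩) fun x y hxy hc => ?_
  have htw : TrueTwins G x y := ⟨hxy, hc⟩
  simpa [locRes_eq_pair_of_trueTwins hconn htw, sum_pair hxy] using hf.2 x y htw.adj

end Graph

end FracLocal

open FracLocal in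
theorem stmt_3_general {V : Type*} [Fintype V] (G : SimpleGraph V)
    (hconn : G.Connected) :
    ldimf G = (Fintype.card V : ℝ) / 2 ↔ ∀ u : V, ∃ v : V, TrueTwins G u v := by
  constructor
  · intro h
    by_contra! hno
    obtain ⟨a, ha⟩ := hno
    linarith [ldimf_le_of_forall_not_trueTwins hconn ha]
  · intro h
    exact le_antisymm (ldimf_le_half_card hconn) (half_card_le_ldimf hconn h)

open FracLocal in
/-- For a connected graph `G` of order `n ≥ 2`, `ldim_f(G) = n/2` iff
every vertex of `G` has a true twin. -/
theorem stmt_3 {V : Type*} [Fintype V] (G : SimpleGraph V)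
    (hconn : G.Connected) (hn : 2 ≤ Fintype.card V) :
    ldimf G = (Fintype.card V : ℝ) / 2 ↔ ∀ u : V, ∃ v : V, TrueTwins G u v :=
  stmt_3_general G hconn
end

section
/- For any connected graph G, ldim_f(G) ≤ |V(G)| / l(G), where l(G) = min{|L(uv)| : uv ∈ E(G)}. -/
open scoped Classical
open Finset

open FracLocal in
/-- For a connected graph `G` with at least one edge,
`ldim_f(G) ≤ |V(G)| / l(G)`. -/
theorem stmt_7 {V : Type*} [Fintype V] (G : SimpleGraph V)
    (hconn : G.Connected) (hedge : ∃ u v : V, G.Adj u v) :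
    ldimf G ≤ (Fintype.card V : ℝ) / (lG G : ℝ) := by

  classical
  set S : Set ℕ := {k : ℕ | ∃ u v, G.Adj u v ∧ (locRes G u v).card = k} with hS
  obtain ⟨u0, v0, huv0⟩ := hedge
  have hSne : S.Nonempty := ⟨(locRes G u0 v0).card, u0, v0, huv0, rfl⟩
  -- each locRes of an edge is nonempty
  have hmem : ∀ u v, G.Adj u v → u ∈ locRes G u v := by
    intro u v huv
    simp only [locRes, Finset.mem_filter, Finset.mem_univ, true_and]
    have h1 : G.dist u u = 0 := by simp
    have h2 : G.dist u v = 1 := by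
      rw [SimpleGraph.dist_eq_one_iff_adj]; exact huv
    omega
  have hlpos : 1 ≤ lG G := by
    rw [Nat.one_le_iff_ne_zero]
    intro h0
    have : 0 ∈ S := by
      have := Nat.sInf_eq_zero.mp h0
      rcases this with h | h
      · exact h
      · rw [hS, h] at hSne; exact absurd hSne Set.not_nonempty_empty
    obtain ⟨u, v, huv, hc⟩ := this
    have := hmem u v huv
    have : (locRes G u v).Nonempty := ⟨u, this⟩
    rw [Finset.card_eq_zero] at hc
    exact absurd hc (Finset.nonempty_iff_ne_empty.mp this)
  have hlle : ∀ u v, G.Adj u v → lG G ≤ (locRes G u v).card := by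
    intro u v huv
    exact Nat.sInf_le ⟨u, v, huv, rfl⟩
  have hlR : (1:ℝ) ≤ (lG G : ℝ) := by exact_mod_cast hlpos
  have hlRpos : (0:ℝ) < (lG G : ℝ) := lt_of_lt_of_le one_pos hlR
  set f : V → ℝ := fun _ => 1 / (lG G : ℝ) with hf
  have hfLRF : IsLRF G f := by
    constructor
    · intro x
      refine ⟨by positivity, ?_⟩
      rw [div_le_one hlRpos]; exact hlR
    · intro u v huv
      rw [Finset.sum_const, nsmul_eq_mul]
      have : (lG G : ℝ) ≤ ((locRes G u v).card : ℝ) := by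
        exact_mod_cast hlle u v huv
      calc (1:ℝ) = (lG G : ℝ) * (1 / (lG G : ℝ)) := by field_simp
        _ ≤ ((locRes G u v).card : ℝ) * (1 / (lG G : ℝ)) := by
            apply mul_le_mul_of_nonneg_right this; positivity
  have hsum : ∑ x : V, f x = (Fintype.card V : ℝ) / (lG G : ℝ) := by
    rw [Finset.sum_const, nsmul_eq_mul, Finset.card_univ]
    field_simp
  have hbdd : BddBelow {w : ℝ | ∃ f : V → ℝ, IsLRF G f ∧ w = ∑ x, f x} := by
    refine ⟨0, ?_⟩
    rintro w ⟨g, hg, rfl⟩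
    exact Finset.sum_nonneg fun x _ => (hg.1 x).1
  calc ldimf G ≤ ∑ x : V, f x := csInf_le hbdd ⟨f, hfLRF, rfl⟩
    _ = _ := hsum
end

section
/- For any connected graph G of order n with at least one edge, ldim_f(G) ≥ n / (n − ldim(G) + 1). -/
open scoped Classical
open Finset

/-- There is a subset of any given size `m` whose `f`-sum is at most `m/n` of the total. -/
lemma exists_small_subset {V : Type*} [Fintype V] (f : V → ℝ) :
    ∀ m : ℕ, m ≤ Fintype.card V → ∃ T : Finset V, T.card = m ∧
      (Fintype.card V : ℝ) * ∑ x ∈ T, f x ≤ (m : ℝ) * ∑ x, f x := by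
  intro m
  induction m with
  | zero => intro _; exact ⟨∅, by simp⟩
  | succ m ih =>
    intro hm
    obtain ⟨T, hTcard, hTsum⟩ := ih (Nat.le_of_succ_le hm)
    have hTsub : T ⊆ Finset.univ := Finset.subset_univ T
    have hne : (Finset.univ \ T).Nonempty := by
      rw [← Finset.card_pos, Finset.card_sdiff_of_subset hTsub, hTcard, Finset.card_univ]
      omega
    obtain ⟨x, hx, hxmin⟩ := Finset.exists_min_image (Finset.univ \ T) f hne
    have hxT : x ∉ T := (Finset.mem_sdiff.mp hx).2
    have hcardc : (Finset.univ \ T).card = Fintype.card V - m := by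
      rw [Finset.card_sdiff_of_subset hTsub, hTcard]; rfl
    have hmin : ((Fintype.card V - m : ℕ) : ℝ) * f x ≤ ∑ y ∈ Finset.univ \ T, f y := by
      rw [← hcardc]
      calc ((Finset.univ \ T).card : ℝ) * f x = ∑ _y ∈ Finset.univ \ T, f x := by
            rw [Finset.sum_const, nsmul_eq_mul]
        _ ≤ ∑ y ∈ Finset.univ \ T, f y := Finset.sum_le_sum fun y hy => hxmin y hy
    have hsd : ∑ y ∈ Finset.univ \ T, f y = (∑ y, f y) - ∑ y ∈ T, f y :=
      Finset.sum_sdiff_eq_sub hTsub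
    refine ⟨insert x T, ?_, ?_⟩
    · rw [Finset.card_insert_of_notMem hxT, hTcard]
    · rw [Finset.sum_insert hxT]
      set n := Fintype.card V
      set w := ∑ y, f y
      set s := ∑ y ∈ T, f y
      have hcast : ((n - m : ℕ) : ℝ) = (n : ℝ) - m := by
        rw [Nat.cast_sub (Nat.le_of_succ_le hm)]
      rw [hsd] at hmin
      rw [hcast] at hmin
      have hnm : (m : ℝ) + 1 ≤ (n : ℝ) := by exact_mod_cast hm
      push_cast
      nlinarith [hmin, hTsum, hnm, mul_le_mul_of_nonneg_left hTsum (by linarith : (0:ℝ) ≤ (n:ℝ) - m - 1),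
        mul_le_mul_of_nonneg_left hmin (by positivity : (0:ℝ) ≤ (n:ℝ))]

open FracLocal in
/-- For a connected graph `G` of order `n` with at least one edge,
`ldim_f(G) ≥ n / (n − ldim(G) + 1)`. -/
theorem stmt_11 {V : Type*} [Fintype V] (G : SimpleGraph V)
    (hconn : G.Connected) (hedge : ∃ u v : V, G.Adj u v) :
    (Fintype.card V : ℝ) / ((Fintype.card V : ℝ) - (ldim G : ℝ) + 1) ≤ ldimf G := by
  obtain ⟨u₀, v₀, huv₀⟩ := hedge
  set n := Fintype.card V with hn
  have hnpos : 0 < n := Fintype.card_pos_iff.mpr ⟨u₀⟩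
  have hnR : 0 < (n : ℝ) := by exact_mod_cast hnpos
  -- u ∈ locRes G u v for adjacent u v
  have hmemR : ∀ u v : V, G.Adj u v → u ∈ locRes G u v := by
    intro u v huv
    simp only [locRes, Finset.mem_filter, Finset.mem_univ, true_and]
    rw [SimpleGraph.dist_self]
    have := hconn.pos_dist_of_ne huv.ne
    omega
  -- the defining set of ldimf is nonempty
  have hone : IsLRF G (fun _ => 1) := by
    refine ⟨fun x => ⟨zero_le_one, le_refl 1⟩, fun u v huv => ?_⟩
    have : (locRes G u v).Nonempty := ⟨u, hmemR u v huv⟩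
    rw [Finset.sum_const, nsmul_eq_mul, mul_one]
    exact_mod_cast Finset.card_pos.mpr this
  have hmem : (∑ x : V, (1:ℝ)) ∈ {w : ℝ | ∃ f : V → ℝ, IsLRF G f ∧ w = ∑ x, f x} :=
    ⟨fun _ => 1, hone, rfl⟩
  apply le_csInf ⟨_, hmem⟩
  rintro w ⟨f, ⟨hf01, hfR⟩, rfl⟩
  set w := ∑ x, f x with hw
  have hfnn : ∀ x, 0 ≤ f x := fun x => (hf01 x).1
  -- w ≥ 1
  have hw1 : 1 ≤ w := by
    calc (1:ℝ) ≤ ∑ x ∈ locRes G u₀ v₀, f x := hfR u₀ v₀ huv₀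
      _ ≤ w := Finset.sum_le_sum_of_subset_of_nonneg (Finset.subset_univ _)
          (fun x _ _ => hfnn x)
  have hwpos : 0 < w := lt_of_lt_of_le one_pos hw1
  set a : ℝ := (n : ℝ) / w with ha
  have hapos : 0 < a := div_pos hnR hwpos
  set m : ℕ := ⌈a⌉₊ - 1 with hm
  have hceil1 : 1 ≤ ⌈a⌉₊ := Nat.one_le_iff_ne_zero.mpr (by
    intro h
    have := Nat.ceil_eq_zero.mp h
    linarith)
  have hm1 : (m : ℝ) + 1 = (⌈a⌉₊ : ℝ) := by
    rw [hm, Nat.cast_sub hceil1]; ring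
  have hmlt : (m : ℝ) < a := by
    have := Nat.ceil_lt_add_one (le_of_lt hapos)
    linarith [hm1.symm ▸ this]
  have hmn : m ≤ n := by
    have : ⌈a⌉₊ ≤ n := Nat.ceil_le.mpr (by
      rw [ha, div_le_iff₀ hwpos]
      nlinarith)
    omega
  obtain ⟨T, hTcard, hTsum⟩ := exists_small_subset f m hmn
  rw [← hn, ← hw] at hTsum
  have hTlt1 : ∑ x ∈ T, f x < 1 := by
    have h1 : (m : ℝ) * w < (n : ℝ) := by
      rw [ha] at hmlt
      exact (lt_div_iff₀ hwpos).mp hmlt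
    nlinarith
  -- S = univ \ T is a local resolving set
  set S : Finset V := Finset.univ \ T with hS
  have hSres : ∀ u v, G.Adj u v → (S ∩ locRes G u v).Nonempty := by
    intro u v huv
    by_contra hcon
    rw [Finset.not_nonempty_iff_eq_empty] at hcon
    have hsub : locRes G u v ⊆ T := by
      intro x hx
      by_contra hxT
      have hxS : x ∈ S := Finset.mem_sdiff.mpr ⟨Finset.mem_univ x, hxT⟩
      have : x ∈ S ∩ locRes G u v := Finset.mem_inter.mpr ⟨hxS, hx⟩
      simp [hcon] at this
    have : (1:ℝ) ≤ ∑ x ∈ T, f x :=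
      le_trans (hfR u v huv)
        (Finset.sum_le_sum_of_subset_of_nonneg hsub (fun x _ _ => hfnn x))
    linarith
  have hScard : S.card = n - m := by
    rw [hS, Finset.card_sdiff_of_subset (Finset.subset_univ T), hTcard]; rfl
  have hdle : ldim G ≤ n - m := Nat.sInf_le ⟨S, hScard, hSres⟩
  -- arithmetic conclusion
  have hdleR : (ldim G : ℝ) ≤ (n : ℝ) - m := by
    have : ((n - m : ℕ) : ℝ) = (n : ℝ) - m := Nat.cast_sub hmn
    calc (ldim G : ℝ) ≤ ((n - m : ℕ) : ℝ) := by exact_mod_cast hdle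
      _ = (n : ℝ) - m := this
  have hkey : a ≤ (n : ℝ) - (ldim G : ℝ) + 1 := by
    have h1 : a ≤ (m : ℝ) + 1 := by rw [hm1]; exact Nat.le_ceil a
    linarith
  have hden : 0 < (n : ℝ) - (ldim G : ℝ) + 1 := lt_of_lt_of_le hapos hkey
  rw [div_le_iff₀ hden]
  rw [ha, div_le_iff₀ hwpos] at hkey
  nlinarith
end

section
/- If G is a vertex-transitive connected graph, then ldim_f(G) = |V(G)| / l(G). -/
open scoped Classical
open Finset
set_option linter.unusedSectionVars false
set_option maxHeartbeats 1000000

namespace FracLocal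

section Aux
variable {V : Type*} [Fintype V] {G : SimpleGraph V}

noncomputable instance : Fintype (G ≃g G) :=
  Fintype.ofInjective (fun φ => (φ : V ≃ V)) (fun a b h => by
    ext x; exact congrArg (fun e => e.toFun x) h)

lemma iso_dist (hconn : G.Connected) (φ : G ≃g G) (x y : V) :
    G.dist (φ x) (φ y) = G.dist x y := by
  have key : ∀ (ψ : G ≃g G) (a b : V), G.dist (ψ a) (ψ b) ≤ G.dist a b := by
    intro ψ a b
    obtain ⟨p, hp⟩ := hconn.exists_walk_length_eq_dist a b
    calc G.dist (ψ a) (ψ b) ≤ (p.map ψ.toHom).length := SimpleGraph.dist_le _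
    _ = G.dist a b := by rw [SimpleGraph.Walk.length_map, hp]
  refine le_antisymm (key φ x y) ?_
  have := key φ.symm (φ x) (φ y)
  simpa using this

lemma locRes_map (hconn : G.Connected) (φ : G ≃g G) (u v : V) :
    locRes G (φ u) (φ v) = (locRes G u v).map φ.toEquiv.toEmbedding := by
  ext x
  simp only [locRes, Finset.mem_map, Finset.mem_filter, Finset.mem_univ, true_and,
    Equiv.coe_toEmbedding]
  constructor
  · intro hx
    refine ⟨φ.symm x, ?_, by simp⟩
    have h1 : G.dist (φ (φ.symm x)) (φ u) = G.dist (φ.symm x) u := iso_dist hconn φ _ _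
    have h2 : G.dist (φ (φ.symm x)) (φ v) = G.dist (φ.symm x) v := iso_dist hconn φ _ _
    simp only [RelIso.apply_symm_apply] at h1 h2
    rw [← h1, ← h2]; exact hx
  · rintro ⟨y, hy, rfl⟩
    show G.dist (φ y) (φ u) ≠ G.dist (φ y) (φ v)
    rw [iso_dist hconn φ y u, iso_dist hconn φ y v]
    exact hy

lemma fiber_card_eq (hvt : ∀ u v : V, ∃ φ : G ≃g G, φ u = v) (y x : V) :
    ((Finset.univ : Finset (G ≃g G)).filter (fun φ => φ y = x)).card
      = ((Finset.univ : Finset (G ≃g G)).filter (fun φ => φ y = y)).card := by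
  obtain ⟨ψ, hψ⟩ := hvt y x
  refine Finset.card_bij (fun φ _ => φ.trans ψ.symm) ?_ ?_ ?_
  · intro φ hφ
    simp only [Finset.mem_filter, Finset.mem_univ, true_and] at hφ ⊢
    simp [RelIso.trans_apply, hφ, ← hψ]
  · intro a ha b hb h
    ext z
    have := congrArg (fun e : G ≃g G => ψ (e z)) h
    simpa [RelIso.trans_apply] using this
  · intro b hb
    simp only [Finset.mem_filter, Finset.mem_univ, true_and] at hb
    refine ⟨b.trans ψ, ?_, ?_⟩
    · simp only [Finset.mem_filter, Finset.mem_univ, true_and]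
      simp [RelIso.trans_apply, hb, hψ]
    · ext z; simp [RelIso.trans_apply]

lemma fiber_card_mul (hvt : ∀ u v : V, ∃ φ : G ≃g G, φ u = v) (y : V) :
    Fintype.card V * ((Finset.univ : Finset (G ≃g G)).filter (fun φ => φ y = y)).card
      = Fintype.card (G ≃g G) := by
  classical
  have h0 : Fintype.card (G ≃g G)
      = ∑ x : V, ((Finset.univ : Finset (G ≃g G)).filter (fun φ => φ y = x)).card := by
    rw [Fintype.card, Finset.card_eq_sum_card_fiberwise (f := fun φ : G ≃g G => φ y)
      (t := Finset.univ) (fun φ _ => Finset.mem_univ _)]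
  have h1 : ∑ x : V, ((Finset.univ : Finset (G ≃g G)).filter (fun φ => φ y = x)).card
      = Fintype.card V * ((Finset.univ : Finset (G ≃g G)).filter (fun φ => φ y = y)).card := by
    rw [Finset.sum_congr rfl (fun x _ => fiber_card_eq hvt y x), Finset.sum_const,
      smul_eq_mul, Finset.card_univ]
  rw [h0, h1]

end Aux

end FracLocal

open FracLocal in
/-- If `G` is a vertex-transitive connected graph (with an edge),
then `ldim_f(G) = |V(G)| / l(G)`. -/
theorem stmt_13 {V : Type*} [Fintype V] (G : SimpleGraph V)
    (hconn : G.Connected) (hedge : ∃ u v : V, G.Adj u v)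
    (hvt : ∀ u v : V, ∃ φ : G ≃g G, φ u = v) :
    ldimf G = (Fintype.card V : ℝ) / (lG G : ℝ) := by
  classical
  obtain ⟨u0, v0, hadj0⟩ := hedge
  have hKne : {k : ℕ | ∃ u v, G.Adj u v ∧ (locRes G u v).card = k}.Nonempty :=
    ⟨_, u0, v0, hadj0, rfl⟩
  obtain ⟨u, v, hadj, hcard0⟩ := Nat.sInf_mem hKne
  have hcard : (locRes G u v).card = lG G := hcard0
  have hlpos : 0 < lG G := by
    rw [← hcard]
    refine Finset.card_pos.mpr ⟨u, ?_⟩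
    simp only [locRes, Finset.mem_filter, Finset.mem_univ, true_and]
    rw [SimpleGraph.dist_self]
    exact (hconn.pos_dist_of_ne hadj.ne).ne
  have hl_le : ∀ a b, G.Adj a b → lG G ≤ (locRes G a b).card :=
    fun a b h => Nat.sInf_le ⟨a, b, h, rfl⟩
  set n : ℕ := Fintype.card V with hn
  set l : ℕ := lG G with hldef
  have hnpos : 0 < n := Fintype.card_pos_iff.mpr ⟨u⟩
  have hlR : (0:ℝ) < l := by exact_mod_cast hlpos
  have hnR : (0:ℝ) < n := by exact_mod_cast hnpos
  set N : ℕ := Fintype.card (G ≃g G) with hNdef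
  have hNpos : 0 < N := Fintype.card_pos_iff.mpr ⟨RelIso.refl G.Adj⟩
  have hNR : (0:ℝ) < N := by exact_mod_cast hNpos
  -- lower bound for any LRF
  have lower : ∀ f : V → ℝ, IsLRF G f → (n:ℝ)/(l:ℝ) ≤ ∑ x, f x := by
    intro f hf
    set F : ℝ := ∑ x, f x with hF
    -- each automorphism image of the minimal edge gives ≥ 1
    have step1 : (N:ℝ) ≤ ∑ φ : G ≃g G, ∑ y ∈ locRes G u v, f (φ y) := by
      have h1 : ∀ φ : G ≃g G, (1:ℝ) ≤ ∑ y ∈ locRes G u v, f (φ y) := by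
        intro φ
        have hadj' : G.Adj (φ u) (φ v) := φ.map_adj_iff.mpr hadj
        have := hf.2 _ _ hadj'
        rwa [locRes_map hconn φ u v, Finset.sum_map] at this
      calc (N:ℝ) = ∑ _φ : G ≃g G, (1:ℝ) := by simp [hNdef]
      _ ≤ _ := Finset.sum_le_sum (fun φ _ => h1 φ)
    -- swap sums and evaluate inner sums by fiber counting
    have step2 : ∑ φ : G ≃g G, ∑ y ∈ locRes G u v, f (φ y)
        = ∑ y ∈ locRes G u v, ∑ φ : G ≃g G, f (φ y) := Finset.sum_comm
    have step3 : ∀ y : V, ∑ φ : G ≃g G, f (φ y)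
        = (((Finset.univ : Finset (G ≃g G)).filter (fun φ => φ y = y)).card : ℝ) * F := by
      intro y
      have := Finset.sum_fiberwise' (Finset.univ : Finset (G ≃g G)) (fun φ => φ y) f
      rw [← this]
      have inner : ∀ x : V, ∑ _φ ∈ (Finset.univ : Finset (G ≃g G)).filter
          (fun φ => φ y = x), f x
          = (((Finset.univ : Finset (G ≃g G)).filter (fun φ => φ y = y)).card : ℝ) * f x := by
        intro x
        rw [Finset.sum_const, nsmul_eq_mul, fiber_card_eq hvt y x]
      rw [Finset.sum_congr rfl (fun x _ => inner x), ← Finset.mul_sum]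
    -- combine, multiplying through by n
    have key : (n:ℝ) * (N:ℝ) ≤ ((l:ℝ) * F) * (N:ℝ) := by
      have c1 : (n:ℝ) * (N:ℝ) ≤ (n:ℝ) * ∑ y ∈ locRes G u v,
          ((((Finset.univ : Finset (G ≃g G)).filter (fun φ => φ y = y)).card : ℝ) * F) := by
        refine mul_le_mul_of_nonneg_left ?_ hnR.le
        calc (N:ℝ) ≤ _ := step1
        _ = _ := step2
        _ = _ := Finset.sum_congr rfl (fun y _ => step3 y)
      have c2 : (n:ℝ) * ∑ y ∈ locRes G u v,
          ((((Finset.univ : Finset (G ≃g G)).filter (fun φ => φ y = y)).card : ℝ) * F)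
          = ((l:ℝ) * F) * (N:ℝ) := by
        rw [Finset.mul_sum]
        have : ∀ y ∈ locRes G u v,
            (n:ℝ) * ((((Finset.univ : Finset (G ≃g G)).filter
              (fun φ => φ y = y)).card : ℝ) * F) = (N:ℝ) * F := by
          intro y _
          have := fiber_card_mul hvt y
          have hc : (n:ℝ) * (((Finset.univ : Finset (G ≃g G)).filter
              (fun φ => φ y = y)).card : ℝ) = (N:ℝ) := by exact_mod_cast this
          rw [← mul_assoc, hc]
        rw [Finset.sum_congr rfl this, Finset.sum_const, hcard, nsmul_eq_mul]
        ring
      linarith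
    have hfin : (n:ℝ) ≤ (l:ℝ) * F := le_of_mul_le_mul_right key hNR
    rw [div_le_iff₀ hlR]
    linarith
  -- the constant function 1/l is an LRF of weight n/l
  have hmem : ((n:ℝ)/(l:ℝ)) ∈ {w : ℝ | ∃ f : V → ℝ, IsLRF G f ∧ w = ∑ x, f x} := by
    refine ⟨fun _ => (l:ℝ)⁻¹, ⟨?_, ?_⟩, ?_⟩
    · intro x
      constructor
      · positivity
      · apply inv_le_one_of_one_le₀
        exact_mod_cast hlpos
    · intro a b hab
      rw [Finset.sum_const, nsmul_eq_mul]
      have h1 : (l:ℝ) ≤ ((locRes G a b).card : ℝ) := by exact_mod_cast hl_le a b hab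
      calc (1:ℝ) = (l:ℝ) * (l:ℝ)⁻¹ := by field_simp
      _ ≤ _ := by
        apply mul_le_mul_of_nonneg_right h1 (by positivity)
    · rw [Finset.sum_const, nsmul_eq_mul, Finset.card_univ, ← hn, div_eq_mul_inv]
  -- conclude
  have hSne : {w : ℝ | ∃ f : V → ℝ, IsLRF G f ∧ w = ∑ x, f x}.Nonempty := ⟨_, hmem⟩
  have hlb : ∀ w ∈ {w : ℝ | ∃ f : V → ℝ, IsLRF G f ∧ w = ∑ x, f x}, (n:ℝ)/(l:ℝ) ≤ w := by
    rintro w ⟨f, hf, rfl⟩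
    exact lower f hf
  exact le_antisymm (csInf_le ⟨_, hlb⟩ hmem) (le_csInf hSne hlb)
end

section
/- In the Cartesian product G □ H of connected graphs, for an edge of the form (u,v₁)(u,v₂) with v₁v₂ ∈ E(H), the local resolving neighborhood satisfies L_{G□H}((u,v₁)(u,v₂)) = V(G) × L_H(v₁v₂). -/
open scoped Classical
open Finset

namespace SimpleGraph

variable {α β : Type*} {G : SimpleGraph α} {H : SimpleGraph β}

lemma Connected.dist_boxProd (hG : G.Connected) (hH : H.Connected) (x y : α × β) :
    (G □ H).dist x y = G.dist x.1 y.1 + H.dist x.2 y.2 := by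
  apply Nat.cast_injective (R := ℕ∞)
  rw [Nat.cast_add, ((hG.boxProd hH).preconnected x y).coe_dist_eq_edist, edist_boxProd,
    (hG.preconnected x.1 y.1).coe_dist_eq_edist, (hH.preconnected x.2 y.2).coe_dist_eq_edist]

end SimpleGraph

open FracLocal in
theorem stmt_18_general {α β : Type*} [Fintype α] [Fintype β]
    (G : SimpleGraph α) (H : SimpleGraph β)
    (hG : G.Connected) (hH : H.Connected)
    (u : α) {v₁ v₂ : β} :
    locRes (G □ H) (u, v₁) (u, v₂) = Finset.univ ×ˢ locRes H v₁ v₂ := by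
  ext ⟨a, b⟩
  simp only [locRes, mem_filter, mem_univ, true_and, mem_product, hG.dist_boxProd hH]
  omega

open FracLocal in
/-- In the Cartesian product `G □ H` of connected graphs, for an
edge `(u,v₁)(u,v₂)` with `v₁v₂ ∈ E(H)`,
`L_{G□H}((u,v₁)(u,v₂)) = V(G) × L_H(v₁v₂)`. -/
theorem stmt_18 {α β : Type*} [Fintype α] [Fintype β]
    (G : SimpleGraph α) (H : SimpleGraph β)
    (hG : G.Connected) (hH : H.Connected)
    (u : α) {v₁ v₂ : β} (h : H.Adj v₁ v₂) :
    locRes (G □ H) (u, v₁) (u, v₂) = Finset.univ ×ˢ locRes H v₁ v₂ :=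
  stmt_18_general G H hG hH u
end
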